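/- arXiv:1905.09126 — 6 statements merged into one kernel-verified Lean document; each statement's English description precedes it below -/
import Mathlib

section
/- Let δ ∈ ℂ with arg δ = α ∈ (0, π/2) and let 1 ≤ m̃ < m be integers. If m·Im(δ) < π, then |Σ_{k=m̃}^{m} (e^{−kδ} − 1)| > (1/2) Σ_{k=m̃}^{m} |e^{−kδ} − 1|. (This holds since each term e^{−kδ} − 1 has argument in (−π, −π/2) when k|δ| < π and Im(−kδ) ∈ (−π,0).) -/
theorem sum_exp_lower_bound (δ : ℂ) (hδ : δ ≠ 0)
    (hα0 : 0 < Complex.arg δ) (hα1 : Complex.arg δ < Real.pi / 2)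
    (mt m : ℕ) (hmt : 1 ≤ mt) (hmm : mt < m)
    (him : (m : ℝ) * δ.im < Real.pi) :
    (1 / 2) * ∑ k ∈ Finset.Icc mt m, ‖Complex.exp (-(k : ℂ) * δ) - 1‖
      < ‖∑ k ∈ Finset.Icc mt m, (Complex.exp (-(k : ℂ) * δ) - 1)‖ := by
  have hre : 0 < δ.re := by
    have h := (Complex.abs_arg_lt_pi_div_two_iff (z := δ)).mp
      (by rw [abs_of_pos hα0]; exact hα1)
    tauto
  have him0 : 0 < δ.im := by
    rw [← Complex.norm_mul_sin_arg]
    have h1 : 0 < ‖δ‖ := norm_pos_iff.mpr hδ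
    have h2 : 0 < Real.sin (Complex.arg δ) :=
      Real.sin_pos_of_pos_of_lt_pi hα0 (lt_trans hα1 (by linarith [Real.pi_pos]))
    positivity
  have hterm : ∀ k ∈ Finset.Icc mt m,
      (Complex.exp (-(k : ℂ) * δ) - 1).re < 0 ∧ (Complex.exp (-(k : ℂ) * δ) - 1).im < 0 := by
    intro k hk
    simp only [Finset.mem_Icc] at hk
    have hk1 : (1 : ℝ) ≤ (k : ℝ) := by exact_mod_cast le_trans hmt hk.1
    have hkm : (k : ℝ) ≤ (m : ℝ) := by exact_mod_cast hk.2
    have hwre : (-(k : ℂ) * δ).re = -((k : ℝ) * δ.re) := by simp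
    have hwim : (-(k : ℂ) * δ).im = -((k : ℝ) * δ.im) := by simp
    have hexplt : Real.exp (-((k : ℝ) * δ.re)) < 1 := by
      rw [Real.exp_lt_one_iff]; nlinarith
    have hexppos : 0 < Real.exp (-((k : ℝ) * δ.re)) := Real.exp_pos _
    have hsin : 0 < Real.sin ((k : ℝ) * δ.im) :=
      Real.sin_pos_of_pos_of_lt_pi (by nlinarith) (by nlinarith)
    constructor
    · rw [Complex.sub_re, Complex.exp_re, Complex.one_re, hwre, hwim]
      have hcos : Real.cos (-((k : ℝ) * δ.im)) ≤ 1 := Real.cos_le_one _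
      nlinarith
    · rw [Complex.sub_im, Complex.exp_im, Complex.one_im, hwre, hwim]
      rw [Real.sin_neg]
      nlinarith
  set S := ∑ k ∈ Finset.Icc mt m, (Complex.exp (-(k : ℂ) * δ) - 1) with hS
  have hne : (Finset.Icc mt m).Nonempty := ⟨mt, by simp [le_of_lt hmm]⟩
  have hSre : S.re = ∑ k ∈ Finset.Icc mt m, (Complex.exp (-(k : ℂ) * δ) - 1).re := by
    rw [hS, Complex.re_sum]
  have hSim : S.im = ∑ k ∈ Finset.Icc mt m, (Complex.exp (-(k : ℂ) * δ) - 1).im := by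
    rw [hS, Complex.im_sum]
  have hSreneg : S.re < 0 := by
    rw [hSre]
    exact Finset.sum_neg (fun k hk => (hterm k hk).1) hne
  have hSimneg : S.im < 0 := by
    rw [hSim]
    exact Finset.sum_neg (fun k hk => (hterm k hk).2) hne
  have habs_re : |S.re| < ‖S‖ := by
    rw [Complex.abs_re_lt_norm]; exact ne_of_lt hSimneg
  have habs_im : |S.im| ≤ ‖S‖ := Complex.abs_im_le_norm S
  have hsum_le : ∑ k ∈ Finset.Icc mt m, ‖Complex.exp (-(k : ℂ) * δ) - 1‖
      ≤ |S.re| + |S.im| := by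
    rw [abs_of_neg hSreneg, abs_of_neg hSimneg, hSre, hSim,
      ← Finset.sum_neg_distrib, ← Finset.sum_neg_distrib, ← Finset.sum_add_distrib]
    apply Finset.sum_le_sum
    intro k hk
    have h1 := (hterm k hk).1
    have h2 := (hterm k hk).2
    have := Complex.norm_le_abs_re_add_abs_im (Complex.exp (-(k : ℂ) * δ) - 1)
    rw [abs_of_neg h1, abs_of_neg h2] at this
    linarith
  linarith
end

section
/- Let α ∈ (−π/2, π/2), δ ∈ ℂ* with arg δ = α, ε ∈ (0,1), w ∈ ℝ with w < 0, and w̃ ∈ ℂ with |w̃ − w| < ε|w| cos α. Then |(e^{w̃δ} − 1)/(e^{wδ} − 1) − 1| < ε. -/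
lemma aux_exp_sub_one (z : ℂ) : ‖Complex.exp z - 1‖ ≤ Real.exp (‖z‖) - 1 := by
  have hsC : Summable fun n : ℕ => z ^ n / (n.factorial : ℂ) :=
    NormedSpace.expSeries_div_summable z
  have hsR : Summable fun n : ℕ => (‖z‖) ^ n / (n.factorial : ℝ) :=
    NormedSpace.expSeries_div_summable (‖z‖)
  have hz : Complex.exp z = ∑' n : ℕ, z ^ n / n.factorial := by
    rw [Complex.exp_eq_exp_ℂ, NormedSpace.exp_eq_tsum_div]
  have hr : Real.exp (‖z‖) = ∑' n : ℕ, (‖z‖) ^ n / n.factorial := by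
    rw [Real.exp_eq_exp_ℝ, NormedSpace.exp_eq_tsum_div]
  have hz1 : Complex.exp z - 1 = ∑' n : ℕ, z ^ (n + 1) / (n + 1).factorial := by
    rw [hz, hsC.tsum_eq_zero_add]
    simp
  have hr1 : Real.exp (‖z‖) - 1
      = ∑' n : ℕ, (‖z‖) ^ (n + 1) / (n + 1).factorial := by
    rw [hr, hsR.tsum_eq_zero_add]
    simp
  rw [hz1, hr1]
  have heq : ∀ n : ℕ, ‖z ^ (n + 1) / ((n + 1).factorial : ℂ)‖
      = (‖z‖) ^ (n + 1) / (n + 1).factorial := by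
    intro n
    rw [norm_div, norm_pow]
    simp
  calc ‖∑' n : ℕ, z ^ (n + 1) / ((n + 1).factorial : ℂ)‖
      ≤ ∑' n : ℕ, ‖z ^ (n + 1) / ((n + 1).factorial : ℂ)‖ :=
        norm_tsum_le_tsum_norm (by
          simp only [heq]
          exact (summable_nat_add_iff 1).mpr hsR)
    _ = ∑' n : ℕ, (‖z‖) ^ (n + 1) / (n + 1).factorial := by
        simp only [heq]

theorem exp_ratio_close (α : ℝ) (hα : α ∈ Set.Ioo (-(Real.pi / 2)) (Real.pi / 2))
    (δ : ℂ) (hδ : δ ≠ 0) (harg : Complex.arg δ = α)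
    (ε : ℝ) (hε0 : 0 < ε) (hε1 : ε < 1)
    (w : ℝ) (hw : w < 0) (wt : ℂ)
    (hwt : ‖wt - w‖ < ε * |w| * Real.cos α) :
    ‖(Complex.exp (wt * δ) - 1) / (Complex.exp (w * δ) - 1) - 1‖ < ε := by
  have hcos : 0 < Real.cos α := Real.cos_pos_of_mem_Ioo hα
  have habs : 0 < ‖δ‖ := norm_pos_iff.mpr hδ
  have hre : δ.re = ‖δ‖ * Real.cos α := by
    rw [← harg, Complex.cos_arg hδ]
    field_simp
  set t : ℝ := -(w * δ.re) with ht_def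
  have hret : 0 < δ.re := by rw [hre]; positivity
  have ht : 0 < t := by simp only [ht_def]; nlinarith
  have hrewd : ((w : ℂ) * δ).re = w * δ.re := by simp [Complex.mul_re]
  have h1 : ‖Complex.exp ((w : ℂ) * δ)‖ = Real.exp (-t) := by
    rw [Complex.norm_exp, hrewd, ht_def, neg_neg]
  have hlt1 : Real.exp (-t) < 1 := Real.exp_lt_one_iff.mpr (by linarith)
  have hne : Complex.exp ((w : ℂ) * δ) - 1 ≠ 0 := by
    intro h
    rw [sub_eq_zero] at h
    rw [h, norm_one] at h1
    linarith
  have hC : 0 < ‖Complex.exp ((w : ℂ) * δ) - 1‖ := by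
    simpa using norm_pos_iff.mpr hne
  have hCge : 1 - Real.exp (-t) ≤ ‖Complex.exp ((w : ℂ) * δ) - 1‖ := by
    have := norm_sub_norm_le (1 : ℂ) (Complex.exp ((w : ℂ) * δ))
    rw [norm_sub_rev] at this
    simpa [h1] using this
  have hsplit : Complex.exp (wt * δ) =
      Complex.exp ((w : ℂ) * δ) * Complex.exp ((wt - w) * δ) := by
    rw [← Complex.exp_add]
    ring_nf
  have hid : (Complex.exp (wt * δ) - 1) / (Complex.exp ((w : ℂ) * δ) - 1) - 1 =
      Complex.exp ((w : ℂ) * δ) * (Complex.exp ((wt - w) * δ) - 1) /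
        (Complex.exp ((w : ℂ) * δ) - 1) := by
    rw [div_sub_one hne, hsplit]
    ring
  rw [hid, norm_div, norm_mul, h1]
  rw [div_lt_iff₀ hC]
  have hu : ‖(wt - (w : ℂ)) * δ‖ < ε * t := by
    rw [norm_mul]
    have : ε * |w| * Real.cos α * ‖δ‖ = ε * t := by
      rw [abs_of_neg hw, ht_def, hre]; ring
    calc ‖wt - (w : ℂ)‖ * ‖δ‖
        < ε * |w| * Real.cos α * ‖δ‖ :=
          mul_lt_mul_of_pos_right hwt habs
      _ = ε * t := this
  have hB : ‖Complex.exp ((wt - (w : ℂ)) * δ) - 1‖ < Real.exp (ε * t) - 1 := by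
    refine lt_of_le_of_lt (aux_exp_sub_one _) ?_
    have := Real.exp_lt_exp.mpr hu
    linarith
  have hconv : Real.exp (ε * t) ≤ 1 - ε + ε * Real.exp t := by
    have := convexOn_exp.2 (Set.mem_univ (0:ℝ)) (Set.mem_univ t)
      (by linarith : (0:ℝ) ≤ 1 - ε) hε0.le (by ring)
    simpa [Real.exp_zero] using this
  have hexp : Real.exp (-t) * Real.exp t = 1 := by
    rw [← Real.exp_add]; simp
  have hexppos : 0 < Real.exp (-t) := Real.exp_pos _
  have hBpos : 0 ≤ ‖Complex.exp ((wt - (w : ℂ)) * δ) - 1‖ :=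
    norm_nonneg _
  nlinarith [mul_le_mul_of_nonneg_left hCge hε0.le,
    mul_lt_mul_of_pos_left hB hexppos]
end

section
/- The function g(z) = e^{−z} − 1 + z has no zeros in the open right half-plane {z ∈ ℂ : Re z > 0}; equivalently, e^{−z} − 1 ≠ −z whenever Re z > 0. -/
/-! Write `z = x + iy` with `x > 0`. If `e^{-z} = 1 - z`, the imaginary parts give
`e^{-x} sin y = y`, impossible for `y ≠ 0` since `e^{-x} < 1` and `|sin y| ≤ |y|`.
So `z = x` is real, and `e^{-x} = 1 - x` contradicts `1 - x < e^{-x}` for `x ≠ 0`. -/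

open Complex

theorem Real.eq_zero_of_mul_sin_eq {a y : ℝ} (ha : |a| < 1) (h : a * Real.sin y = y) : y = 0 := by
  have hle : |y| ≤ |a| * |y| :=
    calc |y| = |a| * |Real.sin y| := by rw [← abs_mul, h]
      _ ≤ |a| * |y| := mul_le_mul_of_nonneg_left Real.abs_sin_le_abs (abs_nonneg a)
  by_contra hy
  nlinarith [abs_pos.2 hy]

theorem Complex.im_eq_zero_of_exp_neg_eq_one_sub {z : ℂ} (hz : 0 < z.re)
    (h : exp (-z) = 1 - z) : z.im = 0 := by
  have him : Real.exp (-z.re) * Real.sin z.im = z.im := by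
    simpa [exp_im] using congrArg im h
  refine Real.eq_zero_of_mul_sin_eq ?_ him
  rwa [abs_of_pos (Real.exp_pos _), Real.exp_lt_one_iff, neg_lt_zero]

theorem g_ne_zero (z : ℂ) (hz : 0 < z.re) :
    Complex.exp (-z) - 1 + z ≠ 0 := by
  intro h
  have heq : exp (-z) = 1 - z := by linear_combination h
  have hreal : z = z.re :=
    Complex.ext rfl (by simpa using im_eq_zero_of_exp_neg_eq_one_sub hz heq)
  rw [hreal, ← ofReal_neg, ← ofReal_exp, ← ofReal_one, ← ofReal_sub, ofReal_inj] at heq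
  linarith [Real.add_one_lt_exp (x := -z.re) (by linarith)]
end

section
/- If α ∈ (0, π/2) and w ∈ ℂ* with arg w = α, then the point 1/(e^{w} − 1) + 1/2 lies in the sector W_α, i.e., its argument lies in (−α, α) and its real part exceeds 1/4 when α ≤ π/4, and exceeds (1/4)·cot α when α > π/4. -/
set_option maxHeartbeats 800000

lemma key_eq (a b : ℝ) (ha : 0 < a) :
    1 / (Complex.exp (↑a + ↑b * Complex.I) - 1) + 1 / 2
      = (↑(Real.sinh a) - ↑(Real.sin b) * Complex.I) / ↑(2 * (Real.cosh a - Real.cos b)) := by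
  have hD : 0 < Real.cosh a - Real.cos b := by
    have h1 : Real.cos b ≤ 1 := Real.cos_le_one b
    have h2 : 1 < Real.cosh a := by rw [Real.one_lt_cosh]; exact ne_of_gt ha
    linarith
  have hD' : ((2 * (Real.cosh a - Real.cos b) : ℝ) : ℂ) ≠ 0 := by
    exact_mod_cast ne_of_gt (by linarith : (0:ℝ) < 2 * (Real.cosh a - Real.cos b))
  have h1 : Complex.exp (↑a + ↑b * Complex.I) - 1 ≠ 0 := by
    intro h
    have h2 : ‖Complex.exp (↑a + ↑b * Complex.I)‖ = 1 := by
      rw [sub_eq_zero] at h; rw [h]; simp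
    rw [Complex.norm_exp] at h2
    simp at h2
    nlinarith [Real.exp_lt_exp.mpr (show (0:ℝ) < a from ha), Real.exp_zero]
  rw [div_add_div _ _ h1 two_ne_zero, div_eq_div_iff (by exact mul_ne_zero h1 two_ne_zero) hD']
  rw [Complex.exp_add, Complex.ofReal_sinh, Complex.ofReal_sin]
  push_cast
  simp only [Complex.sin, Complex.cos, Complex.sinh, Complex.cosh]
  rw [neg_mul, Complex.exp_neg, Complex.exp_neg]
  field_simp [Complex.exp_ne_zero]
  ring_nf
  simp [Complex.I_sq]
  ring_nf

lemma sin_half_sq_le (b : ℝ) : Real.sin (b/2)^2 ≤ (b/2)^2 := by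
  calc Real.sin (b/2)^2 = |Real.sin (b/2)|^2 := (sq_abs _).symm
    _ ≤ |b/2|^2 := pow_le_pow_left₀ (abs_nonneg _) Real.abs_sin_le_abs 2
    _ = (b/2)^2 := sq_abs _

lemma half_angle_D (a b : ℝ) : Real.cosh a - Real.cos b
    = 2 * Real.sinh (a/2)^2 + 2 * Real.sin (b/2)^2 := by
  have h1 := Real.cosh_two_mul (a/2)
  have h2 := Real.cos_two_mul' (b/2)
  rw [show 2 * (a/2) = a by ring] at h1
  rw [show 2 * (b/2) = b by ring] at h2
  have h3 := Real.cosh_sq_sub_sinh_sq (a/2)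
  have h4 := Real.sin_sq_add_cos_sq (b/2)
  linarith

lemma half_angle_S (a : ℝ) : Real.sinh a = 2 * Real.sinh (a/2) * Real.cosh (a/2) := by
  have := Real.sinh_two_mul (a/2)
  rwa [show 2 * (a/2) = a by ring] at this

lemma ineqT1 (a b : ℝ) (ha0 : 0 < a) (hb0 : 0 < b) (hs1 : Real.sin b ≤ b)
    (hs2 : -b ≤ Real.sin b) (hsinh : a < Real.sinh a) :
    -Real.sin b * a < b * Real.sinh a := by
  nlinarith [mul_pos hb0 (sub_pos.mpr hsinh)]

lemma ineqT2 (a b : ℝ) (ha0 : 0 < a) (hb0 : 0 < b) (hs1 : Real.sin b ≤ b)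
    (hs2 : -b ≤ Real.sin b) (hsinh : a < Real.sinh a) :
    -b * Real.sinh a < -Real.sin b * a := by
  nlinarith [mul_pos hb0 (sub_pos.mpr hsinh)]

lemma ineqB (a b : ℝ) (ha0 : 0 < a) (hb0 : 0 < b) (hba : b ≤ a) :
    1/4 * (2 * (Real.cosh a - Real.cos b)) < Real.sinh a := by
  have hShalf : a/2 < Real.sinh (a/2) := Real.self_lt_sinh_iff.mpr (by linarith)
  have hSC : Real.sinh (a/2) < Real.cosh (a/2) := Real.sinh_lt_cosh (a/2)
  have hSpos : 0 < Real.sinh (a/2) := Real.sinh_pos_iff.mpr (by linarith)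
  have h1 := sin_half_sq_le b
  have h2 : (b/2)^2 ≤ (a/2)^2 := by gcongr <;> linarith
  have h3 : (a/2)^2 < Real.sinh (a/2)^2 := by
    have := mul_lt_mul_of_pos_left hShalf (show (0:ℝ) < Real.sinh (a/2) by linarith)
    nlinarith
  have h4 : Real.sinh (a/2)^2 < Real.sinh (a/2) * Real.cosh (a/2) := by
    have := mul_lt_mul_of_pos_left hSC hSpos
    nlinarith
  rw [half_angle_D a b, half_angle_S a]
  linarith

lemma sin_half_sq_le_half (b : ℝ) (hb : 0 < b) : Real.sin (b / 2) ^ 2 ≤ b / 2 := by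
  rcases le_total b 2 with h | h
  · have h1 := sin_half_sq_le b
    nlinarith
  · have := Real.sin_sq_le_one (b/2)
    linarith

lemma ineqC (a b : ℝ) (ha0 : 0 < a) (hb0 : 0 < b) (hab : a < b) :
    a * (2 * (Real.cosh a - Real.cos b)) < Real.sinh a * (4 * b) := by
  have hSC : Real.sinh (a/2) < Real.cosh (a/2) := Real.sinh_lt_cosh (a/2)
  have hSpos : 0 < Real.sinh (a/2) := Real.sinh_pos_iff.mpr (by linarith)
  have hSCpos : 0 < Real.sinh (a/2) * Real.cosh (a/2) := mul_pos hSpos (by linarith)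
  have hsinh : a < Real.sinh a := Real.self_lt_sinh_iff.mpr ha0
  have h1 := sin_half_sq_le_half b hb0
  have h2 : a * Real.sin (b/2)^2 ≤ a * (b/2) := mul_le_mul_of_nonneg_left h1 ha0.le
  have h3 : a * (b/2) < Real.sinh a * (b/2) := mul_lt_mul_of_pos_right hsinh (by linarith)
  have h4 : a * Real.sinh (a/2)^2 < a * (Real.sinh (a/2) * Real.cosh (a/2)) := by
    have h5 : Real.sinh (a/2)^2 < Real.sinh (a/2) * Real.cosh (a/2) := by
      have := mul_lt_mul_of_pos_left hSC hSpos
      nlinarith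
    exact mul_lt_mul_of_pos_left h5 ha0
  have h6 : a * (Real.sinh (a/2) * Real.cosh (a/2)) < b * (Real.sinh (a/2) * Real.cosh (a/2)) :=
    mul_lt_mul_of_pos_right hab hSCpos
  rw [half_angle_S a] at h3
  rw [half_angle_D a b, half_angle_S a]
  linarith

theorem in_sector_W (α : ℝ) (hα0 : 0 < α) (hα1 : α < Real.pi / 2)
    (w : ℂ) (hw : w ≠ 0) (harg : Complex.arg w = α) :
    Complex.arg (1 / (Complex.exp w - 1) + 1 / 2) ∈ Set.Ioo (-α) α ∧
    (α ≤ Real.pi / 4 → (1 / (Complex.exp w - 1) + 1 / 2).re > 1 / 4) ∧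
    (Real.pi / 4 < α →
      (1 / (Complex.exp w - 1) + 1 / 2).re > (1 / 4) * (Real.cos α / Real.sin α)) := by
  have hR : 0 < ‖w‖ := by simpa using (norm_pos_iff.mpr hw)
  have hcos : 0 < Real.cos α := Real.cos_pos_of_mem_Ioo ⟨by linarith [Real.pi_pos], hα1⟩
  have hsin : 0 < Real.sin α := Real.sin_pos_of_pos_of_lt_pi hα0 (by linarith [Real.pi_pos])
  have ha : w.re = ‖w‖ * Real.cos α := by
    rw [← Complex.norm_mul_cos_arg w, harg]
  have hb : w.im = ‖w‖ * Real.sin α := by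
    rw [← Complex.norm_mul_sin_arg w, harg]
  set a := w.re with ha'
  set b := w.im with hb'
  have ha0 : 0 < a := by rw [ha]; positivity
  have hb0 : 0 < b := by rw [hb]; positivity
  have hD : 0 < Real.cosh a - Real.cos b := by
    have h1 : Real.cos b ≤ 1 := Real.cos_le_one b
    have h2 : 1 < Real.cosh a := by rw [Real.one_lt_cosh]; exact ne_of_gt ha0
    linarith
  have key : 1 / (Complex.exp w - 1) + 1 / 2
      = (↑(Real.sinh a) - ↑(Real.sin b) * Complex.I) / ↑(2 * (Real.cosh a - Real.cos b)) := by
    have := key_eq a b ha0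
    rwa [Complex.re_add_im] at this
  have hre : (1 / (Complex.exp w - 1) + 1 / 2).re
      = Real.sinh a / (2 * (Real.cosh a - Real.cos b)) := by
    rw [key, Complex.div_ofReal_re]; simp [Complex.sinh_ofReal_re]
  have him : (1 / (Complex.exp w - 1) + 1 / 2).im
      = -Real.sin b / (2 * (Real.cosh a - Real.cos b)) := by
    rw [key, Complex.div_ofReal_im]; simp [Complex.sin_ofReal_re]
  have hsinha : 0 < Real.sinh a := Real.sinh_pos_iff.mpr ha0
  have hrepos : 0 < (1 / (Complex.exp w - 1) + 1 / 2).re := by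
    rw [hre]; positivity
  set θ := Complex.arg (1 / (Complex.exp w - 1) + 1 / 2) with hθdef
  have hθbd : |θ| < Real.pi / 2 :=
    Complex.abs_arg_lt_pi_div_two_iff.mpr (Or.inl hrepos)
  have hθmem : θ ∈ Set.Ioo (-(Real.pi/2)) (Real.pi/2) := by
    have := abs_lt.mp hθbd
    exact ⟨this.1, this.2⟩
  have hαmem : α ∈ Set.Ioo (-(Real.pi/2)) (Real.pi/2) := ⟨by linarith [Real.pi_pos], hα1⟩
  have hnegαmem : -α ∈ Set.Ioo (-(Real.pi/2)) (Real.pi/2) :=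
    ⟨by linarith, by linarith [Real.pi_pos]⟩
  have htanθ : Real.tan θ = -Real.sin b / Real.sinh a := by
    rw [hθdef, Complex.tan_arg, him, hre]
    rw [div_div_div_cancel_right₀]
    exact ne_of_gt (by positivity)
  have htanα : Real.tan α = b / a := by
    rw [hb, ha, mul_div_mul_left _ _ (ne_of_gt hR)]
    exact Real.tan_eq_sin_div_cos α
  have hsinb_le : |Real.sin b| ≤ b := by
    have := Real.abs_sin_le_abs (x := b)
    rwa [abs_of_pos hb0] at this
  have hs1 : Real.sin b ≤ b := (abs_le.mp hsinb_le).2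
  have hs2 : -b ≤ Real.sin b := (abs_le.mp hsinb_le).1
  have hsinh_gt : a < Real.sinh a := Real.self_lt_sinh_iff.mpr ha0
  have hT1 : -Real.sin b / Real.sinh a < b / a := by
    rw [div_lt_div_iff₀ hsinha ha0]
    exact ineqT1 a b ha0 hb0 hs1 hs2 hsinh_gt
  have hT2 : -(b / a) < -Real.sin b / Real.sinh a := by
    rw [show -(b/a) = -b/a by rw [neg_div], div_lt_div_iff₀ ha0 hsinha]
    exact ineqT2 a b ha0 hb0 hs1 hs2 hsinh_gt
  have harg_lt : θ < α := by
    by_contra h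
    push_neg at h
    have hmono := Real.strictMonoOn_tan.monotoneOn hαmem hθmem h
    rw [htanα, htanθ] at hmono
    linarith
  have harg_gt : -α < θ := by
    by_contra h
    push_neg at h
    have hmono := Real.strictMonoOn_tan.monotoneOn hθmem hnegαmem h
    rw [htanθ, Real.tan_neg, htanα] at hmono
    linarith
  refine ⟨⟨harg_gt, harg_lt⟩, ?_, ?_⟩
  · intro hle
    have hsles : Real.sin α ≤ Real.cos α := by
      rcases eq_or_lt_of_le hle with h' | h'
      · rw [h', Real.sin_pi_div_four, Real.cos_pi_div_four]
      · have := Real.strictMonoOn_sin (a := α) (b := Real.pi/2 - α)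
          ⟨by linarith [Real.pi_pos], by linarith⟩ ⟨by linarith [Real.pi_pos], by linarith⟩
          (by linarith)
        rw [Real.sin_pi_div_two_sub] at this
        linarith
    have hba : b ≤ a := by
      rw [ha, hb]; exact mul_le_mul_of_nonneg_left hsles hR.le
    rw [hre, gt_iff_lt, lt_div_iff₀ (by positivity)]
    exact ineqB a b ha0 hb0 hba
  · intro hlt
    have hslt : Real.cos α < Real.sin α := by
      have := Real.strictMonoOn_sin (a := Real.pi/2 - α) (b := α)
        ⟨by linarith, by linarith [Real.pi_pos]⟩ ⟨by linarith [Real.pi_pos], by linarith⟩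
        (by linarith)
      rw [Real.sin_pi_div_two_sub] at this
      linarith
    have hab : a < b := by
      rw [ha, hb]; exact mul_lt_mul_of_pos_left hslt hR
    have hcd : Real.cos α / Real.sin α = a / b := by
      rw [ha, hb, mul_div_mul_left _ _ (ne_of_gt hR)]
    rw [hre, hcd, gt_iff_lt, show (1:ℝ)/4 * (a/b) = a/(4*b) by ring,
      div_lt_div_iff₀ (by positivity) (by positivity)]
    exact ineqC a b ha0 hb0 hab
end

section
/- Fix h ∈ (1, 3/2) and θ ∈ ℝ. The integral Ω = ∫₀^∞ (2 − (x·sinh x + θx·sin(θx))/(cosh x − cos(θx))) · (1/(cosh x − cos(θx)))^h dx converges absolutely. Moreover, if |θ| ≤ 1 and θ ≠ 0 then Ω < 0, and if θ = 0 (interpreting the integrand continuously) Ω < 0 as well; i.e., Ω(θ) < 0 for all θ ∈ [−1, 1]. -/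
open Real Set MeasureTheory

private lemma nonneg_of_deriv {f f' : ℝ → ℝ} (hd : ∀ x, HasDerivAt f (f' x) x)
    (h0 : f 0 = 0) (hf' : ∀ x, 0 ≤ x → 0 ≤ f' x) : ∀ x, 0 ≤ x → 0 ≤ f x := by
  have hdiff : Differentiable ℝ f := fun x => (hd x).differentiableAt
  have hm : MonotoneOn f (Ici (0:ℝ)) := by
    refine monotoneOn_of_deriv_nonneg (convex_Ici 0) hdiff.continuous.continuousOn
      hdiff.differentiableOn (fun x hx => ?_)
    rw [(hd x).deriv]
    rw [interior_Ici, mem_Ioi] at hx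
    exact hf' x hx.le
  intro x hx
  have := hm self_mem_Ici (mem_Ici.2 hx) hx
  rwa [h0] at this

private lemma pos_of_deriv {f f' : ℝ → ℝ} (hd : ∀ x, HasDerivAt f (f' x) x)
    (h0 : f 0 = 0) (hf' : ∀ x, 0 < x → 0 < f' x) : ∀ x, 0 < x → 0 < f x := by
  have hdiff : Differentiable ℝ f := fun x => (hd x).differentiableAt
  have hm : StrictMonoOn f (Ici (0:ℝ)) := by
    refine strictMonoOn_of_deriv_pos (convex_Ici 0) hdiff.continuous.continuousOn
      (fun x hx => ?_)
    rw [(hd x).deriv]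
    rw [interior_Ici, mem_Ioi] at hx
    exact hf' x hx
  intro x hx
  have := hm self_mem_Ici (mem_Ici.2 hx.le) hx
  rwa [h0] at this

/-- cosh x - 1 ≥ x^2/2 for x ≥ 0 -/
private lemma lemA : ∀ x : ℝ, 0 ≤ x → x^2/2 ≤ Real.cosh x - 1 := by
  have := nonneg_of_deriv (f := fun x => Real.cosh x - 1 - x^2/2)
    (f' := fun x => Real.sinh x - x)
    (fun x => by
      have h1 := ((Real.hasDerivAt_cosh x).sub_const 1).sub
        ((hasDerivAt_pow 2 x).div_const 2)
      exact h1.congr_deriv (by push_cast; ring))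
    (by norm_num)
    (fun x hx => by simpa using (Real.self_le_sinh_iff.2 hx))
  intro x hx
  have h := this x hx; linarith

/-- sinh x ≤ x * cosh x for x ≥ 0 -/
private lemma lemB : ∀ x : ℝ, 0 ≤ x → Real.sinh x ≤ x * Real.cosh x := by
  have := nonneg_of_deriv (f := fun x => x * Real.cosh x - Real.sinh x)
    (f' := fun x => x * Real.sinh x)
    (fun x => by
      have : HasDerivAt (fun x : ℝ => x * Real.cosh x - Real.sinh x)
          (1 * Real.cosh x + x * Real.sinh x - Real.cosh x) x :=
        ((hasDerivAt_id x).mul (Real.hasDerivAt_cosh x)).sub (Real.hasDerivAt_sinh x)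
      convert this using 1
      ring)
    (by norm_num)
    (fun x hx => mul_nonneg hx (Real.sinh_nonneg_iff.2 hx))
  intro x hx
  have h := this x hx; linarith

/-- 2 - 2cos u - u sin u ≤ u^4/12 for all u -/
private lemma lemC : ∀ u : ℝ, 2 - 2*Real.cos u - u*Real.sin u ≤ u^4/12 := by
  have step1 : ∀ u : ℝ, 0 ≤ u → 0 ≤ u^3/3 - Real.sin u + u*Real.cos u := by
    apply nonneg_of_deriv (f' := fun u => u^2 - u*Real.sin u)
    · intro u
      have h1 := (((hasDerivAt_pow 3 u).div_const 3).sub (Real.hasDerivAt_sin u)).add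
        ((hasDerivAt_id u).mul (Real.hasDerivAt_cos u))
      exact h1.congr_deriv (by simp only [id_eq]; push_cast; ring)
    · norm_num
    · intro u hu
      have := Real.sin_le hu
      nlinarith
  have step2 : ∀ u : ℝ, 0 ≤ u → 0 ≤ u^4/12 - 2 + 2*Real.cos u + u*Real.sin u := by
    apply nonneg_of_deriv (f' := fun u => u^3/3 - Real.sin u + u*Real.cos u)
    · intro u
      have h1 := ((((hasDerivAt_pow 4 u).div_const 12).sub_const 2).add
        ((Real.hasDerivAt_cos u).const_mul 2)).add
        ((hasDerivAt_id u).mul (Real.hasDerivAt_sin u))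
      exact h1.congr_deriv (by simp only [id_eq]; push_cast; ring)
    · norm_num
    · exact step1
  intro u
  rcases le_total 0 u with hu | hu
  · have h := step2 u hu; linarith
  · have h := step2 (-u) (by linarith)
    rw [Real.cos_neg, Real.sin_neg] at h
    nlinarith
/-- -(u^4) ≤ 2 - 2cos u - u sin u for all u -/
private lemma lemD : ∀ u : ℝ, -(u^4) ≤ 2 - 2*Real.cos u - u*Real.sin u := by
  have step1 : ∀ u : ℝ, 0 ≤ u → 0 ≤ 4*u^3 + Real.sin u - u*Real.cos u := by
    apply nonneg_of_deriv (f' := fun u => 12*u^2 + u*Real.sin u)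
    · intro u
      have h1 := (((hasDerivAt_pow 3 u).const_mul 4).add (Real.hasDerivAt_sin u)).sub
        ((hasDerivAt_id u).mul (Real.hasDerivAt_cos u))
      exact h1.congr_deriv (by simp only [id_eq]; push_cast; ring)
    · norm_num
    · intro u hu
      have h1 : -u ≤ Real.sin u := by
        have := Real.abs_sin_le_abs (x := u)
        have h2 := neg_abs_le (Real.sin u)
        rw [abs_of_nonneg hu] at this
        linarith
      nlinarith
  have step2 : ∀ u : ℝ, 0 ≤ u → 0 ≤ u^4 + 2 - 2*Real.cos u - u*Real.sin u := by
    apply nonneg_of_deriv (f' := fun u => 4*u^3 + Real.sin u - u*Real.cos u)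
    · intro u
      have h1 := ((((hasDerivAt_pow 4 u).add_const 2).sub
        ((Real.hasDerivAt_cos u).const_mul 2)).sub
        ((hasDerivAt_id u).mul (Real.hasDerivAt_sin u)))
      exact h1.congr_deriv (by simp only [id_eq]; push_cast; ring)
    · norm_num
    · exact step1
  intro u
  rcases le_total 0 u with hu | hu
  · have h := step2 u hu; linarith
  · have h := step2 (-u) (by linarith)
    rw [Real.cos_neg, Real.sin_neg] at h
    nlinarith

/-- strict lower bound: x^4/12 < x sinh x - 2 cosh x + 2 for x > 0 -/
private lemma lemE : ∀ x : ℝ, 0 < x → x^4/12 < x*Real.sinh x - 2*Real.cosh x + 2 := by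
  have step1 : ∀ x : ℝ, 0 < x → 0 < x*Real.cosh x - Real.sinh x - x^3/3 := by
    apply pos_of_deriv (f' := fun x => x*Real.sinh x - x^2)
    · intro x
      have h1 := (((hasDerivAt_id x).mul (Real.hasDerivAt_cosh x)).sub
        (Real.hasDerivAt_sinh x)).sub ((hasDerivAt_pow 3 x).div_const 3)
      exact h1.congr_deriv (by simp only [id_eq]; push_cast; ring)
    · norm_num
    · intro x hx
      have := Real.self_lt_sinh_iff.2 hx
      nlinarith
  have step2 : ∀ x : ℝ, 0 < x → 0 < x*Real.sinh x - 2*Real.cosh x + 2 - x^4/12 := by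
    apply pos_of_deriv (f' := fun x => x*Real.cosh x - Real.sinh x - x^3/3)
    · intro x
      have h1 := ((((hasDerivAt_id x).mul (Real.hasDerivAt_sinh x)).sub
        ((Real.hasDerivAt_cosh x).const_mul 2)).add_const 2).sub
        ((hasDerivAt_pow 4 x).div_const 12)
      exact h1.congr_deriv (by simp only [id_eq]; push_cast; ring)
    · norm_num
    · exact step1
  intro x hx
  have h := step2 x hx; linarith

/-- upper bound: 12 (x sinh x - 2 cosh x + 2) ≤ x^4 cosh x for x ≥ 0 -/
private lemma lemG : ∀ x : ℝ, 0 ≤ x →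
    12*(x*Real.sinh x - 2*Real.cosh x + 2) ≤ x^4 * Real.cosh x := by
  have step1 : ∀ x : ℝ, 0 ≤ x →
      0 ≤ 4*x^3*Real.cosh x + x^4*Real.sinh x - 12*x*Real.cosh x + 12*Real.sinh x := by
    apply nonneg_of_deriv
      (f' := fun x => 12*x^2*Real.cosh x + 8*x^3*Real.sinh x + x^4*Real.cosh x
        - 12*x*Real.sinh x)
    · intro x
      have h1 := (((((hasDerivAt_pow 3 x).const_mul 4).mul (Real.hasDerivAt_cosh x)).add
        ((hasDerivAt_pow 4 x).mul (Real.hasDerivAt_sinh x))).sub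
        (((hasDerivAt_id x).const_mul 12).mul (Real.hasDerivAt_cosh x))).add
        ((Real.hasDerivAt_sinh x).const_mul 12)
      exact h1.congr_deriv (by simp only [id_eq]; push_cast; ring)
    · norm_num
    · intro x hx
      have hB := lemB x hx
      have h1 : 0 ≤ Real.sinh x := Real.sinh_nonneg_iff.2 hx
      have h2 : 0 < Real.cosh x := Real.cosh_pos x
      nlinarith [pow_nonneg hx 3, pow_nonneg hx 4, pow_nonneg hx 2]
  have step2 : ∀ x : ℝ, 0 ≤ x →
      0 ≤ x^4*Real.cosh x - 12*x*Real.sinh x + 24*Real.cosh x - 24 := by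
    apply nonneg_of_deriv
      (f' := fun x => 4*x^3*Real.cosh x + x^4*Real.sinh x - 12*x*Real.cosh x
        + 12*Real.sinh x)
    · intro x
      have h1 := ((((hasDerivAt_pow 4 x).mul (Real.hasDerivAt_cosh x)).sub
        (((hasDerivAt_id x).const_mul 12).mul (Real.hasDerivAt_sinh x))).add
        ((Real.hasDerivAt_cosh x).const_mul 24)).sub_const 24
      exact h1.congr_deriv (by simp only [id_eq]; push_cast; ring)
    · norm_num
    · exact step1
  intro x hx
  have h := step2 x hx; linarith

/-- algebraic rpow computation -/
private lemma calc1 {x : ℝ} (hx : 0 < x) (h : ℝ) :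
    x^4 * (x^2/2)⁻¹ * ((x^2/2)⁻¹)^h = (2*2^h) * x^(2-2*h) := by
  have hx2 : (0:ℝ) < x^2 := by positivity
  have e1 : ((x^2/2)⁻¹ : ℝ)^h = 2^h / x^(2*h) := by
    rw [inv_div, Real.div_rpow (by norm_num) hx2.le]
    congr 1
    rw [← Real.rpow_two, ← Real.rpow_mul hx.le]
  have e2 : x^(2-2*h) = x^2 / x^(2*h) := by
    rw [Real.rpow_sub hx, Real.rpow_two]
  rw [e1, e2, inv_div]
  have h2h : x^(2*h) ≠ 0 := (Real.rpow_pos_of_pos hx _).ne'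
  field_simp

theorem Omega_integrable_and_neg (h θ : ℝ) (hh1 : 1 < h) (hh2 : h < 3 / 2) :
    MeasureTheory.IntegrableOn
      (fun x : ℝ =>
        (2 - (x * Real.sinh x + θ * x * Real.sin (θ * x))
              / (Real.cosh x - Real.cos (θ * x)))
          * ((Real.cosh x - Real.cos (θ * x))⁻¹) ^ h)
      (Set.Ioi 0) ∧
    (|θ| ≤ 1 →
      ∫ x in Set.Ioi (0 : ℝ),
        (2 - (x * Real.sinh x + θ * x * Real.sin (θ * x))
              / (Real.cosh x - Real.cos (θ * x)))
          * ((Real.cosh x - Real.cos (θ * x))⁻¹) ^ h < 0) := by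
  set D : ℝ → ℝ := fun x => Real.cosh x - Real.cos (θ * x) with hDdef
  set N : ℝ → ℝ := fun x => x * Real.sinh x + θ * x * Real.sin (θ * x) with hNdef
  set If : ℝ → ℝ := fun x => (2 - N x / D x) * ((D x)⁻¹) ^ h with hIdef
  -- basic facts
  have hDc : Continuous D := by
    apply Continuous.sub Real.continuous_cosh
    exact Real.continuous_cos.comp (continuous_const.mul continuous_id)
  have hNc : Continuous N := by
    apply Continuous.add (continuous_id.mul Real.continuous_sinh)
    exact (continuous_const.mul continuous_id).mul
      (Real.continuous_sin.comp (continuous_const.mul continuous_id))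
  have hMeas : Measurable If := by
    apply Measurable.mul
    · exact measurable_const.sub (hNc.measurable.div hDc.measurable)
    · exact (Real.continuous_rpow_const (by linarith : (0:ℝ) ≤ h)).measurable.comp
        hDc.measurable.inv
  have hDlb : ∀ x : ℝ, 0 ≤ x → x^2/2 ≤ D x := by
    intro x hx
    have h1 := lemA x hx
    have h2 := Real.cos_le_one (θ * x)
    simp only [hDdef]
    linarith
  have hDpos : ∀ x : ℝ, 0 < x → 0 < D x := by
    intro x hx
    have h1 := hDlb x hx.le
    have h2 : (0:ℝ) < x^2/2 := by positivity
    exact lt_of_lt_of_le h2 h1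
  -- the numerator bound
  have habs : ∀ x : ℝ, 0 < x →
      |2 * D x - N x| ≤ (1/12 + θ^4) * (x^4 * Real.cosh x) := by
    intro x hx
    have hC := lemC (θ * x)
    have hDl := lemD (θ * x)
    have hE := lemE x hx
    have hG := lemG x hx.le
    have hch : (1:ℝ) ≤ Real.cosh x := Real.one_le_cosh x
    have hx4 : (0:ℝ) ≤ x^4 := by positivity
    have hident : 2 * D x - N x
        = (2 - 2*Real.cos (θ*x) - (θ*x)*Real.sin (θ*x))
          - (x*Real.sinh x - 2*Real.cosh x + 2) := by
      simp only [hDdef, hNdef]; ring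
    rw [hident, abs_le]
    constructor
    · nlinarith [sq_nonneg (θ*x), sq_nonneg (θ^2*x^2)]
    · nlinarith [sq_nonneg (θ*x), sq_nonneg (θ^2*x^2)]
  -- pointwise norm bound given a lower bound b on D
  have hIbound : ∀ x b : ℝ, 0 < x → 0 < b → b ≤ D x →
      ‖If x‖ ≤ ((1/12 + θ^4) * (x^4 * Real.cosh x)) * b⁻¹ * (b⁻¹)^h := by
    intro x b hx hb hbD
    have hD0 := hDpos x hx
    have e0 : (2:ℝ) - N x / D x = (2 * D x - N x) / D x := by
      field_simp
    have hnorm : ‖If x‖ = |2 * D x - N x| / D x * ((D x)⁻¹)^h := by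
      simp only [hIdef, e0, norm_mul, Real.norm_eq_abs, abs_div, abs_of_pos hD0,
        abs_of_nonneg (Real.rpow_nonneg (inv_nonneg.2 hD0.le) h)]
    rw [hnorm]
    have h1 : |2 * D x - N x| / D x ≤ ((1/12 + θ^4) * (x^4 * Real.cosh x)) * b⁻¹ := by
      rw [div_eq_mul_inv]
      apply mul_le_mul (habs x hx) _ (inv_nonneg.2 hD0.le) (by positivity)
      exact inv_anti₀ hb hbD
    have h2 : ((D x)⁻¹)^h ≤ (b⁻¹)^h := by
      apply Real.rpow_le_rpow (inv_nonneg.2 hD0.le) (inv_anti₀ hb hbD)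
      linarith
    apply mul_le_mul h1 h2 (Real.rpow_nonneg (inv_nonneg.2 hD0.le) h) (by positivity)
  -- integrability
  have hInt : MeasureTheory.IntegrableOn If (Set.Ioi 0) := by
    have hsplit : Set.Ioc (0:ℝ) 2 ∪ Set.Ioi (2:ℝ) = Set.Ioi (0:ℝ) :=
      Set.Ioc_union_Ioi_eq_Ioi (by norm_num)
    rw [← hsplit]
    apply MeasureTheory.IntegrableOn.union
    · -- on Ioc 0 2
      have hmaj : MeasureTheory.IntegrableOn
          (fun x : ℝ => ((1/12 + θ^4) * Real.cosh 2 * (2*(2:ℝ)^h)) * x^(2-2*h))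
          (Set.Ioc 0 2) := by
        have hii : IntervalIntegrable (fun x : ℝ => x^(2-2*h)) volume 0 2 :=
          intervalIntegral.intervalIntegrable_rpow' (by linarith)
        rw [intervalIntegrable_iff_integrableOn_Ioc_of_le (by norm_num : (0:ℝ) ≤ 2)] at hii
        exact hii.const_mul _
      refine MeasureTheory.Integrable.mono' hmaj hMeas.aestronglyMeasurable ?_
      filter_upwards [MeasureTheory.ae_restrict_mem measurableSet_Ioc] with x hx
      obtain ⟨hx0, hx2⟩ := hx
      have hb : (0:ℝ) < x^2/2 := by positivity
      have hbd := hIbound x (x^2/2) hx0 hb (hDlb x hx0.le)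
      have hcosh : Real.cosh x ≤ Real.cosh 2 := by
        rw [Real.cosh_le_cosh, abs_of_pos hx0]
        rw [abs_of_pos (by norm_num : (0:ℝ) < 2)]
        exact hx2
      calc ‖If x‖
          ≤ ((1/12 + θ^4) * (x^4 * Real.cosh x)) * (x^2/2)⁻¹ * ((x^2/2)⁻¹)^h := hbd
        _ ≤ ((1/12 + θ^4) * (x^4 * Real.cosh 2)) * (x^2/2)⁻¹ * ((x^2/2)⁻¹)^h := by
            gcongr
        _ = ((1/12 + θ^4) * Real.cosh 2) * (x^4 * (x^2/2)⁻¹ * ((x^2/2)⁻¹)^h) := by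
            ring
        _ = ((1/12 + θ^4) * Real.cosh 2 * (2*(2:ℝ)^h)) * x^(2-2*h) := by
            rw [calc1 hx0 h]; ring
    · -- on Ioi 2
      have hmaj : MeasureTheory.IntegrableOn
          (fun x : ℝ => ((1/12 + θ^4) * (4*(4:ℝ)^h)) * (Real.exp (-x) * x^((5:ℝ)-1)))
          (Set.Ioi 2) := by
        have h5 : (0:ℝ) < 5 := by norm_num
        exact ((Real.GammaIntegral_convergent h5).mono_set
          (Set.Ioi_subset_Ioi (by norm_num))).const_mul _
      refine MeasureTheory.Integrable.mono' hmaj hMeas.aestronglyMeasurable ?_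
      filter_upwards [MeasureTheory.ae_restrict_mem measurableSet_Ioi] with x hx
      have hx2 : (2:ℝ) < x := hx
      have hx0 : (0:ℝ) < x := by linarith
      have hex4 : (4:ℝ) ≤ Real.exp x := by
        have h1 : Real.exp 2 ≤ Real.exp x := Real.exp_le_exp.2 hx2.le
        have h2 : (2:ℝ) ≤ Real.exp 1 := by
          have := Real.add_one_le_exp (1:ℝ); linarith
        have h3 : Real.exp 2 = Real.exp 1 * Real.exp 1 := by
          rw [← Real.exp_add]; norm_num
        nlinarith [Real.exp_pos 1]
      have hb : (0:ℝ) < Real.exp x / 4 := by positivity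
      have hbD : Real.exp x / 4 ≤ D x := by
        have hcos := Real.cos_le_one (θ*x)
        have hch : Real.cosh x = (Real.exp x + Real.exp (-x))/2 := Real.cosh_eq x
        have hexp : (0:ℝ) < Real.exp (-x) := Real.exp_pos _
        show Real.exp x / 4 ≤ Real.cosh x - Real.cos (θ * x)
        linarith
      have hbd := hIbound x (Real.exp x / 4) hx0 hb hbD
      have hcosh : Real.cosh x ≤ Real.exp x := by
        rw [Real.cosh_eq]
        have hle : Real.exp (-x) ≤ Real.exp x := Real.exp_le_exp.2 (by linarith)
        linarith
      have hinv : (Real.exp x / 4)⁻¹ = 4 * Real.exp (-x) := by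
        rw [Real.exp_neg]; field_simp
      have hinvh : ((4:ℝ) * Real.exp (-x))^h = 4^h * Real.exp (-x) ^ h :=
        Real.mul_rpow (by norm_num) (Real.exp_pos _).le
      have hexph : Real.exp (-x) ^ h = Real.exp (-(x*h)) := by
        rw [← Real.exp_mul]; ring_nf
      have hmono : Real.exp (-(x*h)) ≤ Real.exp (-x) :=
        Real.exp_le_exp.2 (by nlinarith)
      have hprod : Real.exp x * Real.exp (-x) = 1 := by
        rw [← Real.exp_add]; simp
      have hx54 : x^((5:ℝ)-1) = x^4 := by
        rw [show ((5:ℝ)-1 = ((4:ℕ):ℝ)) by norm_num, Real.rpow_natCast]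
      calc ‖If x‖
          ≤ ((1/12 + θ^4) * (x^4 * Real.cosh x)) * (Real.exp x/4)⁻¹
              * ((Real.exp x/4)⁻¹)^h := hbd
        _ = ((1/12 + θ^4) * (x^4 * Real.cosh x)) * (4 * Real.exp (-x))
              * (4^h * Real.exp (-(x*h))) := by
            rw [hinv, hinvh, hexph]
        _ ≤ ((1/12 + θ^4) * (x^4 * Real.exp x)) * (4 * Real.exp (-x))
              * (4^h * Real.exp (-(x*h))) := by
            gcongr
        _ = ((1/12 + θ^4) * (4*(4:ℝ)^h))
              * ((Real.exp x * Real.exp (-x)) * (x^4 * Real.exp (-(x*h)))) := by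
            ring
        _ = ((1/12 + θ^4) * (4*(4:ℝ)^h)) * (x^4 * Real.exp (-(x*h))) := by
            rw [hprod]; ring
        _ ≤ ((1/12 + θ^4) * (4*(4:ℝ)^h)) * (x^4 * Real.exp (-x)) := by
            gcongr
        _ = ((1/12 + θ^4) * (4*(4:ℝ)^h)) * (Real.exp (-x) * x^((5:ℝ)-1)) := by
            rw [hx54]; ring
  constructor
  · exact hInt
  -- negativity
  intro hθ
  have hneg : ∀ x : ℝ, 0 < x → If x < 0 := by
    intro x hx
    have hD0 := hDpos x hx
    have hθ4 : θ^4 ≤ 1 := by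
      have h1 : θ^2 ≤ 1 := by nlinarith [sq_abs θ, abs_nonneg θ]
      nlinarith
    have hg : 2 * D x - N x < 0 := by
      have hC := lemC (θ*x)
      have hE := lemE x hx
      have hpow : (θ*x)^4 ≤ x^4 := by
        have hx4 : (0:ℝ) ≤ x^4 := by positivity
        nlinarith
      have hident : 2 * D x - N x
          = (2 - 2*Real.cos (θ*x) - (θ*x)*Real.sin (θ*x))
            - (x*Real.sinh x - 2*Real.cosh x + 2) := by
        simp only [hDdef, hNdef]; ring
      rw [hident]
      linarith
    have h1 : 2 - N x / D x < 0 := by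
      rw [show (2:ℝ) - N x / D x = (2*D x - N x)/D x from by field_simp]
      exact div_neg_of_neg_of_pos hg hD0
    have h2 : 0 < ((D x)⁻¹)^h := Real.rpow_pos_of_pos (inv_pos.2 hD0) h
    exact mul_neg_of_neg_of_pos h1 h2
  have hposI : 0 < ∫ x in Set.Ioi (0:ℝ), (-If x) := by
    refine (MeasureTheory.setIntegral_pos_iff_support_of_nonneg_ae ?_ ?_).2 ?_
    · filter_upwards [MeasureTheory.ae_restrict_mem measurableSet_Ioi] with x hx
      exact neg_nonneg.2 (hneg x hx).le
    · exact hInt.neg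
    · have hsub : Set.Ioi (0:ℝ)
          ⊆ Function.support (fun x => -If x) ∩ Set.Ioi 0 := by
        intro x hx
        exact ⟨by simp only [Function.mem_support]
                  exact (neg_pos.2 (hneg x hx)).ne', hx⟩
      calc (0:ENNReal) < volume (Set.Ioi (0:ℝ)) := by
            rw [Real.volume_Ioi]; exact ENNReal.zero_lt_top
        _ ≤ volume (Function.support (fun x => -If x) ∩ Set.Ioi 0) :=
            measure_mono hsub
  have heq : ∫ x in Set.Ioi (0:ℝ), (-If x) = - ∫ x in Set.Ioi (0:ℝ), If x :=
    MeasureTheory.integral_neg If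
  show (∫ x in Set.Ioi (0:ℝ), If x) < 0
  rw [heq] at hposI
  linarith
end

section
/- Let v ∈ ℂ with |v| = 1 and Re v > 0, and let s > 0 be such that cosh(vt) ≠ 1 for all t ∈ (0, s]. Then ∫₀^s Re( v·(sinh(vt) − vt)/(cosh(vt) − 1) ) dt = Re( vs·sinh(vs)/(cosh(vs) − 1) ) − 2, where the integrand extends continuously by 0 at t = 0. -/
open Complex Filter

lemma sinh_bound (z : ℂ) (hz : ‖z‖ ≤ 1) :
    ‖Complex.sinh z - z‖ ≤ 2/9 * ‖z‖ ^ 3 := by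
  have h1 := Complex.exp_bound hz (n := 3) (by norm_num)
  have h2 := Complex.exp_bound (x := -z) (by simpa using hz) (n := 3) (by norm_num)
  have hs : Complex.sinh z - z
      = ((Complex.exp z - ∑ m ∈ Finset.range 3, z ^ m / m.factorial)
        - (Complex.exp (-z) - ∑ m ∈ Finset.range 3, (-z) ^ m / m.factorial)) / 2 := by
    rw [Complex.sinh]
    simp [Finset.sum_range_succ]
    ring
  rw [hs]
  rw [norm_div]
  have := norm_sub_le (Complex.exp z - ∑ m ∈ Finset.range 3, z ^ m / m.factorial)
    (Complex.exp (-z) - ∑ m ∈ Finset.range 3, (-z) ^ m / m.factorial)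
  simp only [Complex.norm_ofNat] at *
  have habs : ‖-z‖ = ‖z‖ := by simp
  rw [habs] at h2
  norm_num [Nat.factorial] at h1 h2 ⊢
  nlinarith [this]

lemma cosh_bound (z : ℂ) (hz : ‖z‖ ≤ 1) :
    ‖Complex.cosh z - 1 - z^2/2‖ ≤ 2/9 * ‖z‖ ^ 3 := by
  have h1 := Complex.exp_bound hz (n := 3) (by norm_num)
  have h2 := Complex.exp_bound (x := -z) (by simpa using hz) (n := 3) (by norm_num)
  have hs : Complex.cosh z - 1 - z^2/2
      = ((Complex.exp z - ∑ m ∈ Finset.range 3, z ^ m / m.factorial)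
        + (Complex.exp (-z) - ∑ m ∈ Finset.range 3, (-z) ^ m / m.factorial)) / 2 := by
    rw [Complex.cosh]
    simp [Finset.sum_range_succ]
    ring
  rw [hs, norm_div]
  have := norm_add_le (Complex.exp z - ∑ m ∈ Finset.range 3, z ^ m / m.factorial)
    (Complex.exp (-z) - ∑ m ∈ Finset.range 3, (-z) ^ m / m.factorial)
  have habs : ‖-z‖ = ‖z‖ := by simp
  rw [habs] at h2
  simp only [Complex.norm_ofNat]
  norm_num [Nat.factorial] at h1 h2 ⊢
  nlinarith [this]

lemma cosh_lower (z : ℂ) (hz : ‖z‖ ≤ 1) :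
    5/18 * ‖z‖ ^ 2 ≤ ‖Complex.cosh z - 1‖ := by
  have h := cosh_bound z hz
  have h2 : ‖z^2/2‖ - ‖Complex.cosh z - 1‖
      ≤ ‖Complex.cosh z - 1 - z^2/2‖ := by
    have := norm_sub_le (Complex.cosh z - 1) (z^2/2)
    have h3 := norm_sub_norm_le (z^2/2) (Complex.cosh z - 1)
    calc ‖z^2/2‖ - ‖Complex.cosh z - 1‖
        ≤ ‖z^2/2 - (Complex.cosh z - 1)‖ := h3
      _ = ‖Complex.cosh z - 1 - z^2/2‖ := by rw [← norm_neg]; ring_nf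
  have h4 : ‖z^2/2‖ = ‖z‖ ^ 2 / 2 := by
    rw [norm_div, norm_pow]; norm_num
  have hz3 : ‖z‖ ^ 3 ≤ ‖z‖ ^ 2 := by
    have := norm_nonneg z
    nlinarith
  nlinarith

lemma tendsto_H : Tendsto (fun z : ℂ => (Complex.sinh z - z) / (Complex.cosh z - 1))
    (nhds 0) (nhds 0) := by
  apply squeeze_zero_norm' (a := fun z : ℂ => 4/5 * ‖z‖)
  · have hev : ∀ᶠ z : ℂ in nhds 0, ‖z‖ ≤ 1 := by
      have : Metric.closedBall (0:ℂ) 1 ∈ nhds (0:ℂ) := Metric.closedBall_mem_nhds 0 one_pos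
      filter_upwards [this] with z hz
      simpa [Complex.dist_eq] using hz
    filter_upwards [hev] with z hz
    rcases eq_or_ne z 0 with rfl | hz0
    · simp
    · have hub := sinh_bound z hz
      have hlb := cosh_lower z hz
      have hzpos : 0 < ‖z‖ := norm_pos_iff.mpr hz0
      have hdpos : 0 < ‖Complex.cosh z - 1‖ := by nlinarith
      rw [norm_div]
      rw [div_le_iff₀ hdpos]
      nlinarith
  · have : Tendsto (fun z : ℂ => ‖z‖) (nhds 0) (nhds 0) := by
      simpa using (continuous_norm.tendsto (0:ℂ)).comp tendsto_id |>.congr (fun x => rfl)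
    have h2 := this.const_mul (4/5 : ℝ)
    simpa using h2

lemma tendsto_G : Tendsto (fun z : ℂ => z * Complex.sinh z / (Complex.cosh z - 1))
    (nhdsWithin 0 {(0:ℂ)}ᶜ) (nhds 2) := by
  have key : Tendsto (fun z : ℂ => z * Complex.sinh z / (Complex.cosh z - 1) - 2)
      (nhdsWithin 0 {(0:ℂ)}ᶜ) (nhds 0) := by
    apply squeeze_zero_norm' (a := fun z : ℂ => 3 * ‖z‖)
    · have hev : ∀ᶠ z : ℂ in nhdsWithin 0 {(0:ℂ)}ᶜ, ‖z‖ ≤ 1 ∧ z ≠ 0 := by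
        apply Filter.eventually_inf_principal.2
        have : Metric.closedBall (0:ℂ) 1 ∈ nhds (0:ℂ) := Metric.closedBall_mem_nhds 0 one_pos
        filter_upwards [this] with z hz hz0
        exact ⟨by simpa [Complex.dist_eq] using hz, hz0⟩
      filter_upwards [hev] with z hz
      obtain ⟨hz1, hz0⟩ := hz
      have hub := sinh_bound z hz1
      have hcb := cosh_bound z hz1
      have hlb := cosh_lower z hz1
      have hzpos : 0 < ‖z‖ := norm_pos_iff.mpr hz0
      have hdpos : 0 < ‖Complex.cosh z - 1‖ := by nlinarith
      have hdne : Complex.cosh z - 1 ≠ 0 := by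
        intro h; rw [h] at hdpos; simp at hdpos
      have heq : z * Complex.sinh z / (Complex.cosh z - 1) - 2
          = (z * (Complex.sinh z - z) - 2 * (Complex.cosh z - 1 - z^2/2)) / (Complex.cosh z - 1) := by
        field_simp
        ring
      rw [heq, norm_div, div_le_iff₀ hdpos]
      have habs : ‖z * (Complex.sinh z - z) - 2 * (Complex.cosh z - 1 - z^2/2)‖
          ≤ ‖z‖ * ‖Complex.sinh z - z‖
            + 2 * ‖Complex.cosh z - 1 - z^2/2‖ := by
        calc _ ≤ ‖z * (Complex.sinh z - z)‖ + ‖2 * (Complex.cosh z - 1 - z^2/2)‖ :=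
              norm_sub_le _ _
          _ = _ := by rw [norm_mul, norm_mul]; norm_num
      have hz3 : ‖z‖ ^ 3 ≤ ‖z‖ ^ 2 := by nlinarith
      nlinarith
    · have : Tendsto (fun z : ℂ => ‖z‖) (nhdsWithin 0 {(0:ℂ)}ᶜ) (nhds 0) := by
        apply Tendsto.mono_left _ nhdsWithin_le_nhds
        simpa using (continuous_norm.tendsto (0:ℂ))
      simpa using this.const_mul (3 : ℝ)
  have := key.add_const 2
  simpa using this

lemma hasDerivAt_F (v : ℂ) (t : ℝ) (hw : Complex.cosh (v * t) - 1 ≠ 0) :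
    HasDerivAt (fun x : ℝ => (v * x * Complex.sinh (v * x) / (Complex.cosh (v * x) - 1)).re)
      ((v * (Complex.sinh (v * t) - v * t) / (Complex.cosh (v * t) - 1)).re) t := by
  have h1 : HasDerivAt (fun z : ℂ => v * z) v (t : ℂ) := by
    simpa using (hasDerivAt_id ((t : ℝ) : ℂ)).const_mul v
  have hsinh : HasDerivAt (fun z : ℂ => Complex.sinh (v * z))
      (Complex.cosh (v * t) * v) (t : ℂ) :=
    (Complex.hasDerivAt_sinh (v * t)).comp _ h1
  have hcosh : HasDerivAt (fun z : ℂ => Complex.cosh (v * z))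
      (Complex.sinh (v * t) * v) (t : ℂ) :=
    (Complex.hasDerivAt_cosh (v * t)).comp _ h1
  have hnum : HasDerivAt (fun z : ℂ => v * z * Complex.sinh (v * z))
      (v * Complex.sinh (v * t) + v * t * (Complex.cosh (v * t) * v)) (t : ℂ) :=
    h1.mul hsinh
  have hden : HasDerivAt (fun z : ℂ => Complex.cosh (v * z) - 1)
      (Complex.sinh (v * t) * v) (t : ℂ) := hcosh.sub_const 1
  have hdiv := hnum.div hden hw
  have heq : ((v * Complex.sinh (v * t) + v * t * (Complex.cosh (v * t) * v)) *
        (Complex.cosh (v * t) - 1) -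
        v * t * Complex.sinh (v * t) * (Complex.sinh (v * t) * v)) /
        (Complex.cosh (v * t) - 1) ^ 2
      = v * (Complex.sinh (v * t) - v * t) / (Complex.cosh (v * t) - 1) := by
    field_simp
    linear_combination (-(v * v * (t : ℂ))) * Complex.sinh_sq (v * t)
  rw [heq] at hdiv
  exact hdiv.real_of_complex

theorem integral_re_sinh_sub (v : ℂ) (hv : ‖v‖ = 1) (hre : 0 < v.re)
    (s : ℝ) (hs : 0 < s)
    (hne : ∀ t ∈ Set.Ioc (0 : ℝ) s, Complex.cosh (v * t) ≠ 1) :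
    ∫ t in (0 : ℝ)..s,
        (v * (Complex.sinh (v * t) - v * t) / (Complex.cosh (v * t) - 1)).re
      = (v * s * Complex.sinh (v * s) / (Complex.cosh (v * s) - 1)).re - 2 := by
  have hv0 : v ≠ 0 := by
    intro h; rw [h] at hv; simp at hv
  set f : ℝ → ℝ := fun t => (v * (Complex.sinh (v * t) - v * t) / (Complex.cosh (v * t) - 1)).re
    with hfdef
  set F : ℝ → ℝ := fun t => (v * t * Complex.sinh (v * t) / (Complex.cosh (v * t) - 1)).re
    with hFdef
  have hg : Continuous fun t : ℝ => v * (t : ℂ) := continuous_const.mul Complex.continuous_ofReal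
  -- continuity of f on Icc 0 s
  have hcont : ContinuousOn f (Set.Icc 0 s) := by
    intro t ht
    rcases eq_or_lt_of_le ht.1 with rfl | htpos
    · -- t = 0
      apply ContinuousAt.continuousWithinAt
      have hg0 : Filter.Tendsto (fun t : ℝ => v * (t : ℂ)) (nhds 0) (nhds 0) := by
        simpa using hg.tendsto 0
      have hH := tendsto_H.comp hg0
      have h2 : Filter.Tendsto (fun t : ℝ =>
          (v * ((Complex.sinh (v * t) - v * t) / (Complex.cosh (v * t) - 1))).re)
          (nhds 0) (nhds 0) := by
        have h3 := hH.const_mul v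
        have h4 := (Complex.continuous_re.tendsto _).comp h3
        simpa [Function.comp_def] using h4
      have hfeq : f = fun t : ℝ =>
          (v * ((Complex.sinh (v * t) - v * t) / (Complex.cosh (v * t) - 1))).re := by
        funext t; simp [hfdef, mul_div_assoc]
      rw [ContinuousAt, hfeq]
      convert h2 using 2
      simp
    · -- t > 0
      apply ContinuousAt.continuousWithinAt
      have hden : Complex.cosh (v * t) - 1 ≠ 0 :=
        sub_ne_zero.mpr (hne t ⟨htpos, ht.2⟩)
      have hc1 : Continuous fun t : ℝ => v * (Complex.sinh (v * t) - v * t) :=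
        continuous_const.mul ((Complex.continuous_sinh.comp hg).sub hg)
      have hc2 : Continuous fun t : ℝ => Complex.cosh (v * t) - 1 :=
        (Complex.continuous_cosh.comp hg).sub continuous_const
      exact (Complex.continuous_re.continuousAt.comp
        ((hc1.continuousAt).div (hc2.continuousAt) hden))
  have huIcc : Set.uIcc (0:ℝ) s = Set.Icc 0 s := Set.uIcc_of_le hs.le
  have hFint : IntervalIntegrable f MeasureTheory.volume 0 s := by
    apply ContinuousOn.intervalIntegrable
    rwa [huIcc]
  -- FTC on subintervals
  have hFTC : ∀ ε ∈ Set.Ioc (0:ℝ) s, ∫ t in ε..s, f t = F s - F ε := by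
    intro ε hε
    apply intervalIntegral.integral_eq_sub_of_hasDerivAt
    · intro t ht
      rw [Set.uIcc_of_le hε.2] at ht
      exact hasDerivAt_F v t (sub_ne_zero.mpr (hne t ⟨lt_of_lt_of_le hε.1 ht.1, ht.2⟩))
    · apply hFint.mono_set
      rw [huIcc, Set.uIcc_of_le hε.2]
      exact Set.Icc_subset_Icc hε.1.le le_rfl
  -- limit filter
  set l := nhdsWithin (0:ℝ) (Set.Ioc 0 s) with hldef
  haveI hlne : l.NeBot := by
    rw [hldef, ← mem_closure_iff_nhdsWithin_neBot, closure_Ioc hs.ne]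
    exact ⟨le_rfl, hs.le⟩
  -- primitive continuity
  have hIntOn : MeasureTheory.IntegrableOn f (Set.uIcc 0 s) MeasureTheory.volume := by
    rw [huIcc]
    exact hcont.integrableOn_compact isCompact_Icc
  have hprim := intervalIntegral.continuousOn_primitive_interval hIntOn
  have hP0 : Filter.Tendsto (fun ε => ∫ t in (0:ℝ)..ε, f t) l (nhds 0) := by
    have h0mem : (0:ℝ) ∈ Set.uIcc 0 s := Set.left_mem_uIcc
    have := (hprim 0 h0mem).tendsto
    simp only [intervalIntegral.integral_same] at this
    apply this.mono_left
    rw [hldef, huIcc]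
    exact nhdsWithin_mono _ Set.Ioc_subset_Icc_self
  have h1 : Filter.Tendsto (fun ε => ∫ t in ε..s, f t) l
      (nhds (∫ t in (0:ℝ)..s, f t)) := by
    have heq : ∀ᶠ ε in l, (∫ t in (0:ℝ)..s, f t) - (∫ t in (0:ℝ)..ε, f t)
        = ∫ t in ε..s, f t := by
      filter_upwards [self_mem_nhdsWithin] with ε hε
      have hsub : Set.uIcc 0 ε ⊆ Set.uIcc 0 s := by
        rw [huIcc, Set.uIcc_of_le hε.1.le]
        exact Set.Icc_subset_Icc le_rfl hε.2
      exact intervalIntegral.integral_interval_sub_left hFint (hFint.mono_set hsub)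
    have := (tendsto_const_nhds (x := ∫ t in (0:ℝ)..s, f t) (f := l)).sub hP0
    simp only [sub_zero] at this
    exact Filter.Tendsto.congr' heq this
  -- F ε tends to 2
  have hFlim : Filter.Tendsto F l (nhds 2) := by
    have hgl : Filter.Tendsto (fun ε : ℝ => v * (ε : ℂ)) l
        (nhdsWithin 0 {(0:ℂ)}ᶜ) := by
      apply tendsto_nhdsWithin_of_tendsto_nhds_of_eventually_within
      · apply Filter.Tendsto.mono_left _ nhdsWithin_le_nhds
        simpa using hg.tendsto 0
      · filter_upwards [self_mem_nhdsWithin] with ε hε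
        simp only [Set.mem_compl_iff, Set.mem_singleton_iff]
        exact mul_ne_zero hv0 (Complex.ofReal_ne_zero.mpr hε.1.ne')
    have hGc := tendsto_G.comp hgl
    have := (Complex.continuous_re.tendsto _).comp hGc
    simpa [hFdef, Function.comp_def] using this
  have h2 : Filter.Tendsto (fun ε => ∫ t in ε..s, f t) l (nhds (F s - 2)) := by
    have := (tendsto_const_nhds (x := F s) (f := l)).sub hFlim
    refine Filter.Tendsto.congr' ?_ this
    filter_upwards [self_mem_nhdsWithin] with ε hε
    exact (hFTC ε hε).symm
  exact tendsto_nhds_unique h1 h2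
end
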